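/- (Salié) Fix an odd prime p and an integer a not divisible by p. Then the Kloosterman sum satisfies K[1,a;p] = ∑_{x=0}^{p-1} χ(x² - 4a) e^{2πi x/p}, where x² - 4a is computed in ℤ/pℤ. -/

import Mathlib

open scoped BigOperators Classical

noncomputable section

/-- The Legendre symbol modulo `p`, viewed as a complex-valued function on `ZMod p`:
`1` on nonzero quadratic residues, `0` at `0`, `-1` on quadratic nonresidues. -/
def chi (p : ℕ) (k : ZMod p) : ℂ :=
  if k = 0 then 0 else if ∃ m : ZMod p, m ^ 2 = k then 1 else -1

/-- The Legendre symbol modulo `p`, viewed as an integer-valued function on `ZMod p`. -/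
def chiZ (p : ℕ) (k : ZMod p) : ℤ :=
  if k = 0 then 0 else if ∃ m : ZMod p, m ^ 2 = k then 1 else -1

/-- The discrete periodic (narrow band) ambiguity function
`A_p(u)[m,n] = (1/p) ∑_k u[k+m] conj(u[k]) e^{-2πi k n/p}`. -/
def ambig (p : ℕ) [NeZero p] (u : ZMod p → ℂ) (m n : ZMod p) : ℂ :=
  (1 / (p : ℂ)) * ∑ k : ZMod p,
    u (k + m) * (starRingEnd ℂ) (u k) *
      Complex.exp (-2 * Real.pi * Complex.I * (k.val : ℂ) * (n.val : ℂ) / (p : ℂ))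

/-- The Kloosterman sum `K[a,b;p] = ∑_{x ∈ (ℤ/pℤ)ˣ} e^{2πi(ax + b x⁻¹)/p}`. -/
def kloost (p : ℕ) [NeZero p] (a b : ℤ) : ℂ :=
  ∑ x : (ZMod p)ˣ,
    Complex.exp (2 * Real.pi * Complex.I *
      ((((a : ZMod p) * (x : ZMod p) + (b : ZMod p) * ((x⁻¹ : (ZMod p)ˣ) : ZMod p)).val : ℂ))
        / (p : ℂ))

/-- The Björck sequence of length `p` for a prime `p ≡ 1 (mod 4)`:
`u[k] = exp(iθχ(k))` with `θ = arccos (1/(1+√p))`. -/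
def bjorck1 (p : ℕ) (k : ZMod p) : ℂ :=
  Complex.exp (Complex.I * (Real.arccos (1 / (1 + Real.sqrt p)) : ℂ) * chi p k)

/-- The Björck sequence of length `p` for a prime `p ≡ 3 (mod 4)`:
`u[k] = exp(iφ)` with `φ = arccos ((1-p)/(1+p))` if `k` is a quadratic nonresidue,
and `u[k] = 1` otherwise. -/
def bjorck3 (p : ℕ) (k : ZMod p) : ℂ :=
  if ∀ m : ZMod p, m ^ 2 ≠ k then
    Complex.exp (Complex.I * (Real.arccos ((1 - (p : ℝ)) / (1 + (p : ℝ))) : ℂ))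
  else 1

end

/-!
Grouping the Kloosterman sum by the value `t = x + a x⁻¹` gives `∑ₜ N(t) ψ(t)`, where `N(t)` counts
the units `x` with `x + a x⁻¹ = t`. Completing the square, these are the `x` with
`(2x - t)² = t² - 4a`, so `N(t) = 1 + χ(t² - 4a)`; the constant `1` contributes
`∑ₜ ψ(t) = 0` since `ψ` is a nontrivial additive character.
-/

open Finset

section FiniteField

variable {F : Type*} [Field F]

theorem add_mul_inv_eq_iff_sq_eq [NeZero (2 : F)] {x : F} (hx : x ≠ 0) (a t : F) :
    x + a * x⁻¹ = t ↔ (2 * x - t) ^ 2 = t ^ 2 - 4 * a := by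
  have key : (2 * x - t) ^ 2 - (t ^ 2 - 4 * a) = 2 * 2 * x * (x + a * x⁻¹ - t) := by
    field_simp; ring
  rw [← sub_eq_zero, ← sub_eq_zero (a := (2 * x - t) ^ 2), key, mul_eq_zero,
    or_iff_right (mul_ne_zero (mul_ne_zero two_ne_zero two_ne_zero) hx)]

variable [Fintype F] [DecidableEq F]

theorem card_units_add_mul_inv_eq (hF : ringChar F ≠ 2) {a : F} (ha : a ≠ 0) (t : F) :
    (#{x : Fˣ | (x : F) + a * (x⁻¹ : Fˣ) = t} : ℤ) = quadraticChar F (t ^ 2 - 4 * a) + 1 := by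
  have : NeZero (2 : F) := ⟨Ring.two_ne_zero hF⟩
  have hmem (x : Fˣ) :
      (x : F) + a * (x⁻¹ : Fˣ) = t ↔ (2 * (x : F) - t) ^ 2 = t ^ 2 - 4 * a := by
    rw [Units.val_inv_eq_inv_val, add_mul_inv_eq_iff_sq_eq x.ne_zero]
  rw [← quadraticChar_card_sqrts hF]
  congr 1
  refine card_bij (fun x _ => 2 * (x : F) - t)
    (fun x hx => by simpa using (hmem x).mp (mem_filter.mp hx).2)
    (fun x _ y _ hxy => Units.ext <| mul_left_cancel₀ two_ne_zero (sub_left_inj.mp hxy))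
    fun z hz => ?_
  have hz : z ^ 2 = t ^ 2 - 4 * a := by simpa using hz
  have hx : (z + t) / 2 ≠ 0 := by
    rintro h
    rw [div_eq_zero_iff, or_iff_left two_ne_zero, add_eq_zero_iff_eq_neg] at h
    subst h
    have h4a : 2 * 2 * a = 0 := by linear_combination hz
    exact ha ((mul_eq_zero.mp h4a).resolve_left (mul_ne_zero two_ne_zero two_ne_zero))
  have hzx : 2 * ((z + t) / 2) - t = z := by field_simp; ring
  refine ⟨Units.mk0 _ hx, mem_filter.mpr ⟨mem_univ _, (hmem _).mpr ?_⟩, ?_⟩ <;>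
    simp only [Units.val_mk0, hzx, hz]

theorem AddChar.sum_units_add_mul_inv_eq {R : Type*} [CommRing R] [IsDomain R]
    (hF : ringChar F ≠ 2) {a : F} (ha : a ≠ 0) {ψ : AddChar F R} (hψ : ψ ≠ 1) :
    ∑ x : Fˣ, ψ (x + a * (x⁻¹ : Fˣ)) = ∑ t, (quadraticChar F (t ^ 2 - 4 * a) : R) * ψ t := by
  calc ∑ x : Fˣ, ψ (x + a * (x⁻¹ : Fˣ))
      = ∑ t, (#{x : Fˣ | (x : F) + a * (x⁻¹ : Fˣ) = t} : R) * ψ t := by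
        rw [← sum_fiberwise' univ _ ψ]
        simp only [sum_const, nsmul_eq_mul]
    _ = ∑ t, ((quadraticChar F (t ^ 2 - 4 * a) : R) + 1) * ψ t := by
        refine sum_congr rfl fun t _ => ?_
        rw [← Int.cast_natCast, card_units_add_mul_inv_eq hF ha t, Int.cast_add, Int.cast_one]
    _ = _ := by simp only [add_mul, one_mul, sum_add_distrib, sum_eq_zero_of_ne_one hψ, add_zero]

end FiniteField

theorem chi_eq_quadraticChar (p : ℕ) [Fact p.Prime] (k : ZMod p) :
    chi p k = quadraticChar (ZMod p) k := by
  simp only [chi, quadraticChar_apply, quadraticCharFun, isSquare_iff_exists_sq, eq_comm]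
  split_ifs <;> simp

theorem salie (p : ℕ) [hp : Fact p.Prime] (hp2 : p ≠ 2) (a : ℤ) (ha : ¬ (p : ℤ) ∣ a) :
    kloost p 1 a =
      ∑ x : ZMod p, chi p (x ^ 2 - 4 * (a : ZMod p)) *
        Complex.exp (2 * Real.pi * Complex.I * (x.val : ℂ) / (p : ℂ)) := by
  have hF : ringChar (ZMod p) ≠ 2 := by rwa [ZMod.ringChar_zmod_n]
  have ha' : (a : ZMod p) ≠ 0 := by rwa [Ne, ZMod.intCast_zmod_eq_zero_iff_dvd]
  have hψ : (ZMod.stdAddChar : AddChar (ZMod p) ℂ) ≠ 1 := by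
    simpa using ZMod.isPrimitive_stdAddChar p one_ne_zero
  have h := AddChar.sum_units_add_mul_inv_eq hF ha' hψ
  simp only [ZMod.stdAddChar_apply, ZMod.toCircle_apply] at h
  simpa only [kloost, Int.cast_one, one_mul, chi_eq_quadraticChar] using h
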